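/- arXiv:1601.05918 — 4 statements merged into one kernel-verified Lean document; each statement's English description precedes it below -/
import Mathlib

section
/- For every integer r ≥ 1 and every s = (s₁,…,s_r) ∈ ℂ^r satisfying Re(s_j + s_{j+1} + ⋯ + s_r) > r − j + 1 for all 1 ≤ j ≤ r, the multiple series Σ_{n₁≥1} ⋯ Σ_{n_r≥1} n₁^{−s₁} (n₁+n₂)^{−s₂} ⋯ (n₁+⋯+n_r)^{−s_r} converges absolutely (i.e., the family of terms is summable). -/
/-!
Write `M_j = n₁ + ⋯ + n_j` for the partial sums, so that the term has absolute value
`∏ M_j ^ (-σ_j)` with `σ_j = Re s_j`. The hypothesis gives some `c > 1` with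
`∑_{i ≥ j} σ_i ≥ (r - j + 1) c`, the tail sums of the constant exponent `c`. Since `log M_j` is
nonnegative and nondecreasing in `j`, Abel summation turns this comparison of tail sums into
`∏ M_j ^ (-σ_j) ≤ ∏ M_j ^ (-c)`, and `M_j ≥ n_j` bounds the latter by `∏ n_j ^ (-c)`,
a product of `r` convergent one-variable series.
-/

/-- The general term of the Euler–Zagier multiple series:
for exponents `s : Fin r → ℂ` and increments `n : Fin r → ℕ+`, the term is
`∏_j (n₁ + ⋯ + n_{j+1})^{-s_j}`, i.e. the summand over `0 < m₁ < m₂ < ⋯ < m_r`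
written via the substitution `m_j = n₁ + ⋯ + n_j`. -/
noncomputable def eulerZagierTerm {r : ℕ} (s : Fin r → ℂ) (n : Fin r → ℕ+) : ℂ :=
  ∏ j : Fin r, (((∑ i ∈ Finset.Iic j, (n i : ℕ)) : ℂ) ^ (-(s j)))

open Finset Filter Topology

theorem summable_fintype_prod_of_nonneg {ι κ : Type*} [Fintype ι] {f : ι → κ → ℝ}
    (hf0 : ∀ i k, 0 ≤ f i k) (hf : ∀ i, Summable (f i)) :
    Summable fun x : ι → κ => ∏ i, f i (x i) := by
  classical
  refine summable_of_sum_le (c := ∏ i, ∑' k, f i k)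
    (fun x => prod_nonneg fun i _ => hf0 i _) fun u => ?_
  calc ∑ x ∈ u, ∏ i, f i (x i)
      ≤ ∑ x ∈ Fintype.piFinset fun i => u.image (· i), ∏ i, f i (x i) :=
        sum_le_sum_of_subset_of_nonneg
          (fun x hx => Fintype.mem_piFinset.2 fun i => mem_image_of_mem _ hx)
          fun x _ _ => prod_nonneg fun i _ => hf0 i _
    _ = ∏ i, ∑ k ∈ u.image (· i), f i k := (prod_univ_sum _ _).symm
    _ ≤ ∏ i, ∑' k, f i k :=
        prod_le_prod (fun i _ => sum_nonneg fun k _ => hf0 i k)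
          fun i _ => (hf i).sum_le_tsum _ fun k _ => hf0 i k

theorem exists_one_lt_forall_mul_lt {ι : Type*} [Finite ι] {u v : ι → ℝ}
    (h : ∀ j, u j < v j) : ∃ c > 1, ∀ j, u j * c < v j := by
  have hev : ∀ᶠ c in 𝓝[>] (1 : ℝ), ∀ j, u j * c < v j := eventually_all.2 fun j =>
    (((continuous_const.mul continuous_id).tendsto' 1 (u j) (mul_one _)).mono_left
      nhdsWithin_le_nhds).eventually (gt_mem_nhds (h j))
  obtain ⟨c, hc, hc1⟩ := (hev.and self_mem_nhdsWithin).exists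
  exact ⟨c, hc1, hc⟩

theorem Fin.sum_mul_nonneg_of_monotone {r : ℕ} {a x : Fin r → ℝ}
    (ha : ∀ j, 0 ≤ ∑ i ∈ Ici j, a i) (hx0 : ∀ j, 0 ≤ x j) (hx : Monotone x) :
    0 ≤ ∑ j, a j * x j := by
  induction r with
  | zero => simp
  | succ r ih =>
    have hsplit : ∑ j, a j * x j
        = (∑ j, a j) * x 0 + ∑ j : Fin r, a j.succ * (x j.succ - x 0) := by
      simp only [Fin.sum_univ_succ, add_mul, sum_mul, mul_sub, sum_sub_distrib]
      ring
    have htail : ∀ j : Fin r, ∑ i ∈ Ici j, a i.succ = ∑ i ∈ Ici j.succ, a i := fun j => by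
      rw [← Fin.map_succEmb_Ici, sum_map]
      rfl
    rw [hsplit]
    refine add_nonneg (mul_nonneg ?_ (hx0 0)) (ih (fun j => htail j ▸ ha j.succ)
      (fun j => sub_nonneg.2 (hx (Fin.zero_le _)))
      fun i j hij => sub_le_sub_right (hx (Fin.succ_le_succ_iff.2 hij)) _)
    simpa using ha 0

theorem Fin.prod_rpow_neg_le_of_tail_le {r : ℕ} {M a b : Fin r → ℝ} (hM1 : ∀ j, 1 ≤ M j)
    (hM : Monotone M) (hab : ∀ j, ∑ i ∈ Ici j, b i ≤ ∑ i ∈ Ici j, a i) :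
    ∏ j, M j ^ (-a j) ≤ ∏ j, M j ^ (-b j) := by
  have hexp : ∀ c : Fin r → ℝ, ∏ j, M j ^ (-c j) = Real.exp (∑ j, -c j * Real.log (M j)) :=
    fun c => by
      rw [Real.exp_sum]
      refine prod_congr rfl fun j _ => ?_
      rw [Real.rpow_def_of_pos (by linarith [hM1 j]), mul_comm]
  have habel : 0 ≤ ∑ j, (a - b) j * Real.log (M j) :=
    Fin.sum_mul_nonneg_of_monotone (fun j => by simpa [sum_sub_distrib] using hab j)
      (fun j => Real.log_nonneg (hM1 j))
      fun i j h => Real.log_le_log (by linarith [hM1 i]) (hM h)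
  rw [hexp, hexp, Real.exp_le_exp, ← sub_nonneg, ← sum_sub_distrib]
  convert habel using 2
  simp only [Pi.sub_apply]
  ring

theorem norm_eulerZagierTerm {r : ℕ} (s : Fin r → ℂ) (n : Fin r → ℕ+) :
    ‖eulerZagierTerm s n‖ = ∏ j, ((∑ i ∈ Iic j, (n i : ℕ) : ℕ) : ℝ) ^ (-(s j).re) := by
  rw [eulerZagierTerm, norm_prod]
  refine prod_congr rfl fun j _ => ?_
  rw [← Nat.cast_sum, Complex.norm_natCast_cpow_of_pos, Complex.neg_re]
  exact (n j).pos.trans_le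
    (single_le_sum (f := fun i => (n i : ℕ)) (fun _ _ => Nat.zero_le _) (mem_Iic.2 le_rfl))

theorem norm_eulerZagierTerm_le {r : ℕ} {s : Fin r → ℂ} {c : ℝ} (hc : 0 ≤ c)
    (hs : ∀ j : Fin r, ((r : ℝ) - (j : ℕ)) * c ≤ (∑ i ∈ Ici j, s i).re) (n : Fin r → ℕ+) :
    ‖eulerZagierTerm s n‖ ≤ ∏ j, ((n j : ℕ) : ℝ) ^ (-c) := by
  set M : Fin r → ℝ := fun j => ((∑ i ∈ Iic j, (n i : ℕ) : ℕ) : ℝ)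
  have hnM : ∀ j, ((n j : ℕ) : ℝ) ≤ M j := fun j =>
    Nat.cast_le.2 <| single_le_sum (f := fun i => (n i : ℕ)) (fun _ _ => Nat.zero_le _)
      (mem_Iic.2 le_rfl)
  have hM1 : ∀ j, 1 ≤ M j := fun j => le_trans (Nat.one_le_cast.2 (n j).pos) (hnM j)
  have hM : Monotone M := fun i j h =>
    Nat.cast_le.2 <| sum_le_sum_of_subset (f := fun i => (n i : ℕ)) (Iic_subset_Iic.2 h)
  calc ‖eulerZagierTerm s n‖ = ∏ j, M j ^ (-(s j).re) := norm_eulerZagierTerm s n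
    _ ≤ ∏ j, M j ^ (-c) := Fin.prod_rpow_neg_le_of_tail_le hM1 hM fun j => by
        simpa [Fin.card_Ici, Complex.re_sum] using hs j
    _ ≤ ∏ j, ((n j : ℕ) : ℝ) ^ (-c) :=
        prod_le_prod (fun j _ => by positivity) fun j _ =>
          Real.rpow_le_rpow_of_nonpos (by positivity) (hnM j) (by linarith)

theorem statement0_general (r : ℕ) (s : Fin r → ℂ)
    (hs : ∀ j : Fin r, ((r : ℝ) - (j : ℕ)) < (∑ i ∈ Finset.Ici j, s i).re) :
    Summable (fun n : Fin r → ℕ+ => eulerZagierTerm s n) := by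
  obtain ⟨c, hc1, hc⟩ := exists_one_lt_forall_mul_lt hs
  have hsum : Summable fun k : ℕ+ => ((k : ℕ) : ℝ) ^ (-c) :=
    (Real.summable_nat_rpow.2 (by linarith)).comp_injective PNat.coe_injective
  exact Summable.of_norm_bounded
    (summable_fintype_prod_of_nonneg (fun _ _ => by positivity) fun _ => hsum)
    (norm_eulerZagierTerm_le (by linarith) fun j => (hc j).le)

/-- For `r ≥ 1` and `s ∈ ℂ^r` with `Re(s_j + ⋯ + s_r) > r - j + 1` for all `1 ≤ j ≤ r`
(written here with `j` running over `Fin r`, so the condition reads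
`Re(∑_{i ≥ j} s_i) > r - j`), the Euler–Zagier multiple series converges absolutely. -/
theorem statement0 (r : ℕ) (hr : 1 ≤ r) (s : Fin r → ℂ)
    (hs : ∀ j : Fin r, ((r : ℝ) - (j : ℕ)) < (∑ i ∈ Finset.Ici j, s i).re) :
    Summable (fun n : Fin r → ℕ+ => eulerZagierTerm s n) :=
  statement0_general r s hs
end

section
/- For all s₁, s₂, s₃ ∈ ℂ with Re s₁ > 1, Re s₂ > 1 and Re s₃ > 1, the harmonic product formula ζ(s₁)ζ₂(s₂,s₃) = ζ₃(s₁,s₂,s₃) + ζ₂(s₁+s₂,s₃) + ζ₃(s₂,s₁,s₃) + ζ₂(s₂,s₁+s₃) + ζ₃(s₂,s₃,s₁) holds, where all multiple zeta-functions are given by their absolutely convergent series. -/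
open Complex

noncomputable def cc (n : ℕ) (s : ℂ) : ℂ := (n : ℂ) ^ (-s)

lemma norm_cc {n : ℕ} (hn : 0 < n) (s : ℂ) : ‖cc n s‖ = (n : ℝ) ^ (-s.re) := by
  rw [cc, Complex.norm_natCast_cpow_of_pos hn]
  simp

lemma cc_add {n : ℕ} (hn : 0 < n) (s t : ℂ) : cc n (s + t) = cc n s * cc n t := by
  rw [cc, cc, cc, neg_add, Complex.cpow_add]
  exact_mod_cast hn.ne'

lemma summable_rr {σ : ℝ} (hσ : 1 < σ) :
    Summable (fun n : ℕ => ((n + 1 : ℕ) : ℝ) ^ (-σ)) := by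
  have h := Real.summable_nat_rpow (p := -σ) |>.mpr (by linarith)
  exact (summable_nat_add_iff 1).mpr h

lemma summable_norm_one {s : ℂ} (hs : 1 < s.re) :
    Summable (fun n : ℕ => ‖cc (n + 1) s‖) :=
  (summable_rr hs).congr fun n => (norm_cc (Nat.succ_pos n) s).symm

lemma rr_le {a b : ℕ} {σ : ℝ} (hσ : 1 < σ) (hab : b ≤ a) (hb : 0 < b) :
    ((a : ℝ)) ^ (-σ) ≤ ((b : ℝ)) ^ (-σ) :=
  Real.rpow_le_rpow_of_nonpos (by exact_mod_cast hb) (by exact_mod_cast hab)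
    (by linarith)

lemma summable_norm_two {s t : ℂ} (hs : 1 < s.re) (ht : 1 < t.re) :
    Summable (fun p : ℕ × ℕ => ‖cc (p.1 + 1) s * cc (p.1 + p.2 + 2) t‖) := by
  have hb : Summable (fun p : ℕ × ℕ =>
      ((p.1 + 1 : ℕ) : ℝ) ^ (-s.re) * ((p.2 + 1 : ℕ) : ℝ) ^ (-t.re)) :=
    (summable_rr hs).mul_of_nonneg (summable_rr ht)
      (fun _ => Real.rpow_nonneg (by positivity) _)
      (fun _ => Real.rpow_nonneg (by positivity) _)
  refine hb.of_nonneg_of_le (fun _ => norm_nonneg _) ?_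
  rintro ⟨a, b⟩
  rw [norm_mul, norm_cc (by omega), norm_cc (by omega)]
  exact mul_le_mul_of_nonneg_left (rr_le ht (by omega) (by omega))
    (Real.rpow_nonneg (by positivity) _)

lemma summable_norm_three {s t u : ℂ} (hs : 1 < s.re) (ht : 1 < t.re) (hu : 1 < u.re) :
    Summable (fun p : ℕ × ℕ × ℕ =>
      ‖cc (p.1 + 1) s * cc (p.1 + p.2.1 + 2) t * cc (p.1 + p.2.1 + p.2.2 + 3) u‖) := by
  have hb : Summable (fun p : ℕ × ℕ × ℕ =>
      ((p.1 + 1 : ℕ) : ℝ) ^ (-s.re) *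
        (((p.2.1 + 1 : ℕ) : ℝ) ^ (-t.re) * ((p.2.2 + 1 : ℕ) : ℝ) ^ (-u.re))) :=
    (summable_rr hs).mul_of_nonneg
      ((summable_rr ht).mul_of_nonneg (summable_rr hu)
        (fun _ => Real.rpow_nonneg (by positivity) _)
        (fun _ => Real.rpow_nonneg (by positivity) _))
      (fun _ => Real.rpow_nonneg (by positivity) _)
      (fun _ => mul_nonneg (Real.rpow_nonneg (by positivity) _)
        (Real.rpow_nonneg (by positivity) _))
  refine hb.of_nonneg_of_le (fun _ => norm_nonneg _) ?_
  rintro ⟨a, b, c⟩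
  rw [norm_mul, norm_mul, norm_cc (by omega), norm_cc (by omega), norm_cc (by omega)]
  rw [mul_assoc]
  refine mul_le_mul_of_nonneg_left ?_ (Real.rpow_nonneg (by positivity) _)
  exact mul_le_mul (rr_le ht (by omega) (by omega)) (rr_le hu (by omega) (by omega))
    (Real.rpow_nonneg (by positivity) _) (Real.rpow_nonneg (by positivity) _)

/-- The Euler–Zagier double zeta-function `ζ₂(s₁,s₂) = ∑_{0 < m < n} m^{-s₁} n^{-s₂}`. -/
noncomputable def zeta2 (s₁ s₂ : ℂ) : ℂ :=
  ∑' p : ℕ+ × ℕ+, ((p.1 : ℕ) : ℂ) ^ (-s₁) * ((((p.1 : ℕ) + (p.2 : ℕ)) : ℂ) ^ (-s₂))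

/-- The Euler–Zagier triple zeta-function
`ζ₃(s₁,s₂,s₃) = ∑_{0 < l < m < n} l^{-s₁} m^{-s₂} n^{-s₃}`. -/
noncomputable def zeta3 (s₁ s₂ s₃ : ℂ) : ℂ :=
  ∑' p : ℕ+ × ℕ+ × ℕ+,
    ((p.1 : ℕ) : ℂ) ^ (-s₁) * ((((p.1 : ℕ) + (p.2.1 : ℕ)) : ℂ) ^ (-s₂)) *
      ((((p.1 : ℕ) + (p.2.1 : ℕ) + (p.2.2 : ℕ)) : ℂ) ^ (-s₃))

lemma hasSum_zeta {s : ℂ} (hs : 1 < s.re) :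
    HasSum (fun n : ℕ => cc (n + 1) s) (riemannZeta s) := by
  have hsum : Summable (fun n : ℕ => cc (n + 1) s) := (summable_norm_one hs).of_norm
  have h := hsum.hasSum
  rwa [show (∑' n : ℕ, cc (n + 1) s) = riemannZeta s from ?_] at h
  rw [zeta_eq_tsum_one_div_nat_add_one_cpow hs]
  refine tsum_congr fun n => ?_
  rw [cc, Complex.cpow_neg, one_div]
  push_cast
  rfl

lemma hasSum_zeta2 {s t : ℂ} (hs : 1 < s.re) (ht : 1 < t.re) :
    HasSum (fun p : ℕ × ℕ => cc (p.1 + 1) s * cc (p.1 + p.2 + 2) t) (zeta2 s t) := by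
  have hsum : Summable (fun p : ℕ × ℕ => cc (p.1 + 1) s * cc (p.1 + p.2 + 2) t) :=
    (summable_norm_two hs ht).of_norm
  set Z2 : ℕ+ × ℕ+ → ℂ :=
    fun p => ((p.1 : ℕ) : ℂ) ^ (-s) * ((((p.1 : ℕ) + (p.2 : ℕ)) : ℂ) ^ (-t)) with hZ2
  set e2 : ℕ × ℕ ≃ ℕ+ × ℕ+ :=
    Equiv.prodCongr Equiv.pnatEquivNat.symm Equiv.pnatEquivNat.symm with he2
  have hcomp : (Z2 ∘ e2) = fun p : ℕ × ℕ => cc (p.1 + 1) s * cc (p.1 + p.2 + 2) t := by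
    funext ⟨a, b⟩
    simp only [Function.comp_apply, he2, hZ2, Equiv.prodCongr_apply, Equiv.coe_fn_symm_mk,
      Equiv.pnatEquivNat, Prod.map, cc, Nat.succPNat_coe]
    push_cast
    ring_nf
  have hz2 : Summable Z2 := (e2.summable_iff).mp (by rw [hcomp]; exact hsum)
  have h := (e2.hasSum_iff).mpr hz2.hasSum
  rw [hcomp] at h
  exact h

lemma hasSum_zeta3 {s t u : ℂ} (hs : 1 < s.re) (ht : 1 < t.re) (hu : 1 < u.re) :
    HasSum (fun p : ℕ × ℕ × ℕ =>
      cc (p.1 + 1) s * cc (p.1 + p.2.1 + 2) t * cc (p.1 + p.2.1 + p.2.2 + 3) u)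
      (zeta3 s t u) := by
  have hsum : Summable (fun p : ℕ × ℕ × ℕ =>
      cc (p.1 + 1) s * cc (p.1 + p.2.1 + 2) t * cc (p.1 + p.2.1 + p.2.2 + 3) u) :=
    (summable_norm_three hs ht hu).of_norm
  set Z3 : ℕ+ × ℕ+ × ℕ+ → ℂ := fun p =>
    ((p.1 : ℕ) : ℂ) ^ (-s) * ((((p.1 : ℕ) + (p.2.1 : ℕ)) : ℂ) ^ (-t)) *
      ((((p.1 : ℕ) + (p.2.1 : ℕ) + (p.2.2 : ℕ)) : ℂ) ^ (-u)) with hZ3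
  set e3 : ℕ × ℕ × ℕ ≃ ℕ+ × ℕ+ × ℕ+ :=
    Equiv.prodCongr Equiv.pnatEquivNat.symm
      (Equiv.prodCongr Equiv.pnatEquivNat.symm Equiv.pnatEquivNat.symm) with he3
  have hcomp : (Z3 ∘ e3) = fun p : ℕ × ℕ × ℕ =>
      cc (p.1 + 1) s * cc (p.1 + p.2.1 + 2) t * cc (p.1 + p.2.1 + p.2.2 + 3) u := by
    funext ⟨a, b, c⟩
    simp only [Function.comp_apply, he3, hZ3, Equiv.prodCongr_apply, Equiv.coe_fn_symm_mk,
      Equiv.pnatEquivNat, Prod.map, cc, Nat.succPNat_coe]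
    push_cast
    ring_nf
  have hz3 : Summable Z3 := (e3.summable_iff).mp (by rw [hcomp]; exact hsum)
  have h := (e3.hasSum_iff).mpr hz3.hasSum
  rw [hcomp] at h
  exact h

-- Partition of ℕ × ℕ × ℕ (indices (k, p, q) representing K=k+1, M=p+1, N=p+q+2)
def T1 : Set (ℕ × ℕ × ℕ) := {x | x.1 < x.2.1}
def T2 : Set (ℕ × ℕ × ℕ) := {x | x.1 = x.2.1}
def T3 : Set (ℕ × ℕ × ℕ) := {x | x.2.1 < x.1 ∧ x.1 ≤ x.2.1 + x.2.2}
def T4 : Set (ℕ × ℕ × ℕ) := {x | x.1 = x.2.1 + x.2.2 + 1}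
def T5 : Set (ℕ × ℕ × ℕ) := {x | x.2.1 + x.2.2 + 1 < x.1}

def g1 : ℕ × ℕ × ℕ → ℕ × ℕ × ℕ := fun x => (x.1, x.1 + x.2.1 + 1, x.2.2)
def g2 : ℕ × ℕ → ℕ × ℕ × ℕ := fun x => (x.1, x.1, x.2)
def g3 : ℕ × ℕ × ℕ → ℕ × ℕ × ℕ := fun x => (x.1 + x.2.1 + 1, x.1, x.2.1 + x.2.2 + 1)
def g4 : ℕ × ℕ → ℕ × ℕ × ℕ := fun x => (x.1 + x.2 + 1, x.1, x.2)
def g5 : ℕ × ℕ × ℕ → ℕ × ℕ × ℕ := fun x => (x.1 + x.2.1 + x.2.2 + 2, x.1, x.2.1)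

lemma inj_g1 : Function.Injective g1 := by
  rintro ⟨a, b, c⟩ ⟨d, e, f⟩ h
  simp only [g1, Prod.ext_iff] at h ⊢
  omega

lemma inj_g2 : Function.Injective g2 := by
  rintro ⟨a, b⟩ ⟨c, d⟩ h
  simp only [g2, Prod.ext_iff] at h ⊢
  omega

lemma inj_g3 : Function.Injective g3 := by
  rintro ⟨a, b, c⟩ ⟨d, e, f⟩ h
  simp only [g3, Prod.ext_iff] at h ⊢
  omega

lemma inj_g4 : Function.Injective g4 := by
  rintro ⟨a, b⟩ ⟨c, d⟩ h
  simp only [g4, Prod.ext_iff] at h ⊢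
  omega

lemma inj_g5 : Function.Injective g5 := by
  rintro ⟨a, b, c⟩ ⟨d, e, f⟩ h
  simp only [g5, Prod.ext_iff] at h ⊢
  omega

lemma range_g1 : Set.range g1 = T1 := by
  ext ⟨k, p, q⟩
  simp only [Set.mem_range, T1, Set.mem_setOf_eq]
  constructor
  · rintro ⟨⟨a, b, c⟩, h⟩
    simp only [g1, Prod.ext_iff] at h
    omega
  · intro h
    exact ⟨(k, p - k - 1, q), by simp only [g1, Prod.ext_iff, true_and, and_true]; omega⟩

lemma range_g2 : Set.range g2 = T2 := by
  ext ⟨k, p, q⟩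
  simp only [Set.mem_range, T2, Set.mem_setOf_eq]
  constructor
  · rintro ⟨⟨a, b⟩, h⟩
    simp only [g2, Prod.ext_iff] at h
    omega
  · intro h
    exact ⟨(p, q), by simp only [g2, Prod.ext_iff, true_and, and_true]; omega⟩

lemma range_g3 : Set.range g3 = T3 := by
  ext ⟨k, p, q⟩
  simp only [Set.mem_range, T3, Set.mem_setOf_eq]
  constructor
  · rintro ⟨⟨a, b, c⟩, h⟩
    simp only [g3, Prod.ext_iff] at h
    omega
  · intro h
    exact ⟨(p, k - p - 1, q - (k - p)), by simp only [g3, Prod.ext_iff, true_and, and_true]; omega⟩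

lemma range_g4 : Set.range g4 = T4 := by
  ext ⟨k, p, q⟩
  simp only [Set.mem_range, T4, Set.mem_setOf_eq]
  constructor
  · rintro ⟨⟨a, b⟩, h⟩
    simp only [g4, Prod.ext_iff] at h
    omega
  · intro h
    exact ⟨(p, q), by simp only [g4, Prod.ext_iff, true_and, and_true]; omega⟩

lemma range_g5 : Set.range g5 = T5 := by
  ext ⟨k, p, q⟩
  simp only [Set.mem_range, T5, Set.mem_setOf_eq]
  constructor
  · rintro ⟨⟨a, b, c⟩, h⟩
    simp only [g5, Prod.ext_iff] at h
    omega
  · intro h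
    exact ⟨(p, q, k - p - q - 2), by simp only [g5, Prod.ext_iff, true_and, and_true]; omega⟩

/-- The harmonic product formula
`ζ(s₁)ζ₂(s₂,s₃) = ζ₃(s₁,s₂,s₃) + ζ₂(s₁+s₂,s₃) + ζ₃(s₂,s₁,s₃) + ζ₂(s₂,s₁+s₃) + ζ₃(s₂,s₃,s₁)`
for `Re s₁ > 1`, `Re s₂ > 1`, `Re s₃ > 1`. -/
theorem statement4 (s₁ s₂ s₃ : ℂ) (h₁ : 1 < s₁.re) (h₂ : 1 < s₂.re) (h₃ : 1 < s₃.re) :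
    riemannZeta s₁ * zeta2 s₂ s₃ =
      zeta3 s₁ s₂ s₃ + zeta2 (s₁ + s₂) s₃ + zeta3 s₂ s₁ s₃ + zeta2 s₂ (s₁ + s₃) +
        zeta3 s₂ s₃ s₁ := by
  set F : ℕ × ℕ × ℕ → ℂ :=
    fun x => cc (x.1 + 1) s₁ * (cc (x.2.1 + 1) s₂ * cc (x.2.1 + x.2.2 + 2) s₃) with hF
  have hmul : Summable (fun x : ℕ × (ℕ × ℕ) =>
      cc (x.1 + 1) s₁ * (cc (x.2.1 + 1) s₂ * cc (x.2.1 + x.2.2 + 2) s₃)) :=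
    summable_mul_of_summable_norm (R := ℂ) (ι := ℕ) (ι' := ℕ × ℕ)
      (f := fun n : ℕ => cc (n + 1) s₁)
      (g := fun p : ℕ × ℕ => cc (p.1 + 1) s₂ * cc (p.1 + p.2 + 2) s₃)
      (summable_norm_one h₁) (summable_norm_two h₂ h₃)
  have hFsum : HasSum F (riemannZeta s₁ * zeta2 s₂ s₃) :=
    HasSum.mul (α := ℂ) (ι := ℕ) (κ := ℕ × ℕ)
      (f := fun n : ℕ => cc (n + 1) s₁)
      (g := fun p : ℕ × ℕ => cc (p.1 + 1) s₂ * cc (p.1 + p.2 + 2) s₃)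
      (hasSum_zeta h₁) (hasSum_zeta2 h₂ h₃) hmul
  have h12 : 1 < (s₁ + s₂).re := by rw [Complex.add_re]; linarith
  have h13 : 1 < (s₁ + s₃).re := by rw [Complex.add_re]; linarith
  have h1 : HasSum (F ∘ g1) (zeta3 s₁ s₂ s₃) := by
    have h := hasSum_zeta3 h₁ h₂ h₃
    rw [show (fun p : ℕ × ℕ × ℕ =>
        cc (p.1 + 1) s₁ * cc (p.1 + p.2.1 + 2) s₂ * cc (p.1 + p.2.1 + p.2.2 + 3) s₃)
        = F ∘ g1 from ?_] at h
    · exact h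
    funext ⟨l, a, b⟩
    simp only [Function.comp_apply, hF, g1]
    rw [show l + a + 1 + 1 = l + a + 2 from by omega,
      show l + a + 1 + b + 2 = l + a + b + 3 from by omega]
    ring
  have h2 : HasSum (F ∘ g2) (zeta2 (s₁ + s₂) s₃) := by
    have h := hasSum_zeta2 h12 h₃
    rw [show (fun p : ℕ × ℕ =>
        cc (p.1 + 1) (s₁ + s₂) * cc (p.1 + p.2 + 2) s₃) = F ∘ g2 from ?_] at h
    · exact h
    funext ⟨p, q⟩
    simp only [Function.comp_apply, hF, g2]
    rw [cc_add (by omega)]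
    ring
  have h3 : HasSum (F ∘ g3) (zeta3 s₂ s₁ s₃) := by
    have h := hasSum_zeta3 h₂ h₁ h₃
    rw [show (fun p : ℕ × ℕ × ℕ =>
        cc (p.1 + 1) s₂ * cc (p.1 + p.2.1 + 2) s₁ * cc (p.1 + p.2.1 + p.2.2 + 3) s₃)
        = F ∘ g3 from ?_] at h
    · exact h
    funext ⟨m, d, e⟩
    simp only [Function.comp_apply, hF, g3]
    rw [show m + d + 1 + 1 = m + d + 2 from by omega,
      show m + (d + e + 1) + 2 = m + d + e + 3 from by omega]
    ring
  have h4 : HasSum (F ∘ g4) (zeta2 s₂ (s₁ + s₃)) := by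
    have h := hasSum_zeta2 h₂ h13
    rw [show (fun p : ℕ × ℕ =>
        cc (p.1 + 1) s₂ * cc (p.1 + p.2 + 2) (s₁ + s₃)) = F ∘ g4 from ?_] at h
    · exact h
    funext ⟨p, q⟩
    simp only [Function.comp_apply, hF, g4]
    rw [cc_add (n := p + q + 2) (by omega),
      show p + q + 1 + 1 = p + q + 2 from by omega]
    ring
  have h5 : HasSum (F ∘ g5) (zeta3 s₂ s₃ s₁) := by
    have h := hasSum_zeta3 h₂ h₃ h₁
    rw [show (fun p : ℕ × ℕ × ℕ =>
        cc (p.1 + 1) s₂ * cc (p.1 + p.2.1 + 2) s₃ * cc (p.1 + p.2.1 + p.2.2 + 3) s₁)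
        = F ∘ g5 from ?_] at h
    · exact h
    funext ⟨m, d, e⟩
    simp only [Function.comp_apply, hF, g5]
    rw [show m + d + e + 2 + 1 = m + d + e + 3 from by omega]
    ring
  have H1 : HasSum (F ∘ ((↑) : T1 → ℕ × ℕ × ℕ)) (zeta3 s₁ s₂ s₃) := by
    have h := (inj_g1.hasSum_range_iff (f := F)).mpr h1
    rwa [range_g1] at h
  have H2 : HasSum (F ∘ ((↑) : T2 → ℕ × ℕ × ℕ)) (zeta2 (s₁ + s₂) s₃) := by
    have h := (inj_g2.hasSum_range_iff (f := F)).mpr h2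
    rwa [range_g2] at h
  have H3 : HasSum (F ∘ ((↑) : T3 → ℕ × ℕ × ℕ)) (zeta3 s₂ s₁ s₃) := by
    have h := (inj_g3.hasSum_range_iff (f := F)).mpr h3
    rwa [range_g3] at h
  have H4 : HasSum (F ∘ ((↑) : T4 → ℕ × ℕ × ℕ)) (zeta2 s₂ (s₁ + s₃)) := by
    have h := (inj_g4.hasSum_range_iff (f := F)).mpr h4
    rwa [range_g4] at h
  have H5 : HasSum (F ∘ ((↑) : T5 → ℕ × ℕ × ℕ)) (zeta3 s₂ s₃ s₁) := by
    have h := (inj_g5.hasSum_range_iff (f := F)).mpr h5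
    rwa [range_g5] at h
  have d12 : Disjoint T1 T2 := by
    rw [Set.disjoint_left]; rintro ⟨k, p, q⟩ hx hy
    simp only [T1, T2, Set.mem_setOf_eq] at hx hy; omega
  have d3 : Disjoint (T1 ∪ T2) T3 := by
    rw [Set.disjoint_left]; rintro ⟨k, p, q⟩ hx hy
    simp only [T1, T2, T3, Set.mem_union, Set.mem_setOf_eq] at hx hy; omega
  have d4 : Disjoint (T1 ∪ T2 ∪ T3) T4 := by
    rw [Set.disjoint_left]; rintro ⟨k, p, q⟩ hx hy
    simp only [T1, T2, T3, T4, Set.mem_union, Set.mem_setOf_eq] at hx hy; omega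
  have d5 : Disjoint (T1 ∪ T2 ∪ T3 ∪ T4) T5 := by
    rw [Set.disjoint_left]; rintro ⟨k, p, q⟩ hx hy
    simp only [T1, T2, T3, T4, T5, Set.mem_union, Set.mem_setOf_eq] at hx hy; omega
  have hU : T1 ∪ T2 ∪ T3 ∪ T4 ∪ T5 = Set.univ := by
    ext ⟨k, p, q⟩
    simp only [T1, T2, T3, T4, T5, Set.mem_union, Set.mem_setOf_eq, Set.mem_univ, iff_true]
    omega
  have Htot := (((H1.add_disjoint d12 H2).add_disjoint d3 H3).add_disjoint d4 H4).add_disjoint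
    d5 H5
  rw [hasSum_subtype_iff_indicator, hU, Set.indicator_univ] at Htot
  exact hFsum.unique Htot
end

section
/- For every s₁ ∈ ℂ with Re s₁ > 1, the limit as t → 1⁺ (t real, t > 1) of (t−1) ζ₂(s₁, t) exists and equals ζ(s₁). -/
open Filter Topology

section Aux13

lemma aux13_summable_cpow {s : ℂ} (hs : 1 < s.re) :
    Summable (fun n : ℕ => (n : ℂ) ^ (-s)) := by
  have := Complex.summable_one_div_nat_cpow.mpr hs
  simpa only [one_div, ← Complex.cpow_neg] using this

lemma aux13_tsum_cpow {s : ℂ} (hs : 1 < s.re) :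
    ∑' n : ℕ, (n : ℂ) ^ (-s) = riemannZeta s := by
  rw [zeta_eq_tsum_one_div_nat_cpow hs]
  exact tsum_congr fun n => by rw [Complex.cpow_neg, one_div]

lemma aux13_tail_eq {s : ℂ} (hs : 1 < s.re) (m : ℕ) :
    ∑' k : ℕ+, ((m : ℂ) + ((k : ℕ) : ℂ)) ^ (-s)
      = riemannZeta s - ∑ n ∈ Finset.range (m + 1), (n : ℂ) ^ (-s) := by
  have hsum := aux13_summable_cpow hs
  have h1 : ∑' k : ℕ+, ((m : ℂ) + ((k : ℕ) : ℂ)) ^ (-s)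
      = ∑' i : ℕ, ((i + (m + 1) : ℕ) : ℂ) ^ (-s) := by
    rw [← Equiv.tsum_eq Equiv.pnatEquivNat.symm
      (fun k : ℕ+ => ((m : ℂ) + ((k : ℕ) : ℂ)) ^ (-s))]
    refine tsum_congr fun i => ?_
    congr 1
    simp [Equiv.pnatEquivNat, Nat.succPNat]
    ring
  have h2 := Summable.sum_add_tsum_nat_add (f := fun n : ℕ => (n : ℂ) ^ (-s)) (m + 1) hsum
  rw [h1, ← aux13_tsum_cpow hs]
  linear_combination h2

lemma aux13_rsummable {t : ℝ} (ht : 1 < t) : Summable (fun n : ℕ => (n : ℝ) ^ (-t)) :=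
  Real.summable_nat_rpow.mpr (by linarith)

lemma aux13_rsummable_pnat {t : ℝ} (ht : 1 < t) :
    Summable (fun k : ℕ+ => ((k : ℕ) : ℝ) ^ (-t)) :=
  (aux13_rsummable ht).comp_injective PNat.coe_injective

lemma aux13_tsum_pnat_rpow {t : ℝ} (ht : 1 < t) :
    ∑' k : ℕ+, ((k : ℕ) : ℝ) ^ (-t) = ∑' n : ℕ, (n : ℝ) ^ (-t) := by
  rw [Summable.tsum_eq_zero_add (aux13_rsummable ht)]
  rw [← Equiv.tsum_eq Equiv.pnatEquivNat.symm (fun k : ℕ+ => ((k : ℕ) : ℝ) ^ (-t))]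
  have h0 : ((0:ℕ) : ℝ) ^ (-t) = 0 := by
    rw [Nat.cast_zero, Real.zero_rpow (by linarith : -t ≠ 0)]
  rw [h0, zero_add]
  exact tsum_congr fun i => by simp [Equiv.pnatEquivNat, Nat.succPNat]

lemma aux13_norm_cpow_real {t : ℝ} (n : ℕ) (hn : 0 < n) :
    ‖(n : ℂ) ^ (-(t : ℂ))‖ = (n : ℝ) ^ (-t) := by
  rw [Complex.norm_natCast_cpow_of_pos hn]
  norm_num

lemma aux13_ofReal_zeta {t : ℝ} (ht : 1 < t) :
    ((∑' n : ℕ, (n : ℝ) ^ (-t) : ℝ) : ℂ) = riemannZeta (t : ℂ) := by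
  rw [Complex.ofReal_tsum, ← aux13_tsum_cpow (s := (t:ℂ)) (by simpa)]
  exact tsum_congr fun n => by
    rw [Complex.ofReal_cpow n.cast_nonneg]
    push_cast
    ring_nf

lemma aux13_hcoe : Tendsto (fun t : ℝ => (t : ℂ)) (𝓝[>] (1:ℝ)) (𝓝[≠] (1:ℂ)) := by
  apply tendsto_nhdsWithin_of_tendsto_nhds_of_eventually_within
  · simpa using (Complex.continuous_ofReal.tendsto 1).mono_left nhdsWithin_le_nhds
  · filter_upwards [self_mem_nhdsWithin] with t ht
    simp only [Set.mem_compl_iff, Set.mem_singleton_iff]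
    exact_mod_cast ne_of_gt ht

lemma aux13_hz :
    Tendsto (fun t : ℝ => ((t:ℂ) - 1) * riemannZeta (t:ℂ)) (𝓝[>] (1:ℝ)) (𝓝 1) :=
  riemannZeta_residue_one.comp aux13_hcoe

lemma aux13_hZr :
    Tendsto (fun t : ℝ => (t - 1) * ∑' n : ℕ, (n : ℝ) ^ (-t)) (𝓝[>] (1:ℝ)) (𝓝 1) := by
  have h := (Complex.continuous_re.tendsto 1).comp aux13_hz
  refine Tendsto.congr' ?_ (by simpa using h)
  filter_upwards [self_mem_nhdsWithin] with t (ht : 1 < t)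
  have : ((t:ℂ) - 1) * riemannZeta (t:ℂ) = (((t - 1) * ∑' n : ℕ, (n : ℝ) ^ (-t) : ℝ) : ℂ) := by
    rw [← aux13_ofReal_zeta ht]; push_cast; ring
  simp [Function.comp, this]

lemma aux13_hsum_f {s₁ : ℂ} (h₁ : 1 < s₁.re) {t : ℝ} (ht : 1 < t) :
    Summable (fun p : ℕ+ × ℕ+ =>
      ((p.1 : ℕ) : ℂ) ^ (-s₁) * ((((p.1 : ℕ) : ℂ) + ((p.2 : ℕ) : ℂ)) ^ (-(t : ℂ)))) := by
  have hg : Summable (fun p : ℕ+ × ℕ+ => ((p.1 : ℕ) : ℝ) ^ (-s₁.re) * ((p.2 : ℕ) : ℝ) ^ (-t)) :=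
    Summable.mul_of_nonneg (f := fun k : ℕ+ => ((k : ℕ) : ℝ) ^ (-s₁.re))
      (g := fun k : ℕ+ => ((k : ℕ) : ℝ) ^ (-t))
      (aux13_rsummable_pnat h₁) (aux13_rsummable_pnat ht)
      (fun m => by positivity) (fun k => by positivity)
  refine Summable.of_norm ?_
  refine hg.of_nonneg_of_le (fun p => norm_nonneg _) ?_
  rintro ⟨m, k⟩
  rw [norm_mul, Complex.norm_natCast_cpow_of_pos m.pos]
  have hbase : (((m : ℕ) : ℂ) + ((k : ℕ) : ℂ)) = (((m : ℕ) + (k : ℕ) : ℕ) : ℂ) := by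
    push_cast; ring
  rw [hbase, aux13_norm_cpow_real _ (Nat.add_pos_left m.pos _)]
  have h2 : (((m : ℕ) + (k : ℕ) : ℕ) : ℝ) ^ (-t) ≤ ((k : ℕ) : ℝ) ^ (-t) :=
    Real.rpow_le_rpow_of_nonpos (by exact_mod_cast k.pos)
      (by exact_mod_cast Nat.le_add_left _ _) (by linarith)
  refine le_trans (mul_le_mul_of_nonneg_left h2 ?_) ?_
  · positivity
  · apply mul_le_mul_of_nonneg_right _ (by positivity)
    simp [Complex.neg_re]

end Aux13

/-- For `Re s₁ > 1`, `(t-1) ζ₂(s₁,t) → ζ(s₁)` as `t → 1⁺`. -/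
theorem statement13 (s₁ : ℂ) (h₁ : 1 < s₁.re) :
    Tendsto (fun t : ℝ => ((t : ℂ) - 1) * zeta2 s₁ (t : ℂ))
      (nhdsWithin 1 (Set.Ioi 1)) (nhds (riemannZeta s₁)) := by
  have hnorm1 : ∀ m : ℕ+, ‖((m : ℕ) : ℂ) ^ (-s₁)‖ = ((m : ℕ) : ℝ) ^ (-s₁.re) := fun m => by
    rw [Complex.norm_natCast_cpow_of_pos m.pos]; simp
  have ha : Summable (fun m : ℕ+ => ((m : ℕ) : ℝ) ^ (-s₁.re)) := aux13_rsummable_pnat h₁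
  set F : ℝ → ℕ+ → ℂ := fun t m =>
    ((t : ℂ) - 1) * (((m : ℕ) : ℂ) ^ (-s₁)
      * ∑' k : ℕ+, (((m : ℕ) : ℂ) + ((k : ℕ) : ℂ)) ^ (-(t : ℂ))) with hF
  -- eventual equality
  have hE : ∀ᶠ t : ℝ in 𝓝[>] (1:ℝ), ((t : ℂ) - 1) * zeta2 s₁ (t : ℂ) = ∑' m : ℕ+, F t m := by
    filter_upwards [self_mem_nhdsWithin] with t (ht : 1 < t)
    have h1 : zeta2 s₁ (t : ℂ) = ∑' m : ℕ+, (((m : ℕ) : ℂ) ^ (-s₁)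
        * ∑' k : ℕ+, (((m : ℕ) : ℂ) + ((k : ℕ) : ℂ)) ^ (-(t : ℂ))) := by
      rw [zeta2, Summable.tsum_prod' (aux13_hsum_f h₁ ht)]
      exact tsum_congr fun m => tsum_mul_left (a := ((m : ℕ) : ℂ) ^ (-s₁))
        (f := fun k : ℕ+ => (((m : ℕ) : ℂ) + ((k : ℕ) : ℂ)) ^ (-(t : ℂ)))
      exact fun b => (aux13_hsum_f h₁ ht).prod_factor b
    rw [h1, hF, ← tsum_mul_left]
  -- per-term limits
  have hpt : ∀ m : ℕ+, Tendsto (F · m) (𝓝[>] (1:ℝ)) (𝓝 (((m : ℕ) : ℂ) ^ (-s₁))) := by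
    intro m
    have hSm : Tendsto (fun t : ℝ => ((t:ℂ) - 1)
        * ∑ n ∈ Finset.range ((m : ℕ) + 1), (n : ℂ) ^ (-(t : ℂ))) (𝓝[>] (1:ℝ)) (𝓝 0) := by
      apply squeeze_zero_norm' (a := fun t : ℝ => |t - 1| * ((m : ℕ) + 1))
      · filter_upwards [self_mem_nhdsWithin] with t (ht : 1 < t)
        rw [norm_mul]
        have h1 : ‖(t:ℂ) - 1‖ = |t - 1| := by
          rw [show (t:ℂ) - 1 = ((t - 1 : ℝ) : ℂ) by push_cast; ring, Complex.norm_real,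
            Real.norm_eq_abs]
        rw [h1]
        apply mul_le_mul_of_nonneg_left _ (abs_nonneg _)
        calc ‖∑ n ∈ Finset.range ((m : ℕ) + 1), (n : ℂ) ^ (-(t : ℂ))‖
            ≤ ∑ n ∈ Finset.range ((m : ℕ) + 1), ‖(n : ℂ) ^ (-(t : ℂ))‖ := norm_sum_le _ _
          _ ≤ ∑ _n ∈ Finset.range ((m : ℕ) + 1), (1:ℝ) := by
              apply Finset.sum_le_sum
              intro n _
              rcases Nat.eq_zero_or_pos n with rfl | hn
              · simp [Complex.zero_cpow (show -(t:ℂ) ≠ 0 by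
                  simp only [ne_eq, neg_eq_zero]
                  exact_mod_cast (by linarith : t ≠ 0))]
              · rw [aux13_norm_cpow_real _ hn]
                exact Real.rpow_le_one_of_one_le_of_nonpos (by exact_mod_cast hn) (by linarith)
          _ = ((m : ℕ) + 1 : ℝ) := by simp
      · have h0 : Tendsto (fun t : ℝ => |t - 1| * ((m : ℕ) + 1)) (𝓝 1) (𝓝 0) := by
          have hc : Continuous fun t : ℝ => |t - 1| * (((m : ℕ) : ℝ) + 1) := by continuity
          simpa using hc.tendsto 1
        exact h0.mono_left nhdsWithin_le_nhds
    have hcongr : (F · m) =ᶠ[𝓝[>] (1:ℝ)] fun t : ℝ => ((m : ℕ) : ℂ) ^ (-s₁)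
        * (((t:ℂ) - 1) * riemannZeta (t:ℂ)
          - ((t:ℂ) - 1) * ∑ n ∈ Finset.range ((m : ℕ) + 1), (n : ℂ) ^ (-(t : ℂ))) := by
      filter_upwards [self_mem_nhdsWithin] with t (ht : 1 < t)
      rw [hF]
      simp only
      rw [aux13_tail_eq (s := (t:ℂ)) (by simpa) (m : ℕ)]
      ring
    refine Tendsto.congr' hcongr.symm ?_
    have := (aux13_hz.sub hSm).const_mul (((m : ℕ) : ℂ) ^ (-s₁))
    simpa using this
  -- eventual bound
  have hb : ∀ᶠ t : ℝ in 𝓝[>] (1:ℝ), ∀ m : ℕ+, ‖F t m‖ ≤ 2 * ((m : ℕ) : ℝ) ^ (-s₁.re) := by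
    have h2 : ∀ᶠ t : ℝ in 𝓝[>] (1:ℝ), (t - 1) * ∑' n : ℕ, (n : ℝ) ^ (-t) ≤ 2 :=
      aux13_hZr.eventually (eventually_le_nhds (by norm_num))
    filter_upwards [self_mem_nhdsWithin, h2] with t (ht : 1 < t) h2t m
    have hle : ∀ k : ℕ+, (((m : ℕ) + (k : ℕ) : ℕ) : ℝ) ^ (-t) ≤ ((k : ℕ) : ℝ) ^ (-t) :=
      fun k => Real.rpow_le_rpow_of_nonpos (by exact_mod_cast k.pos)
        (by exact_mod_cast Nat.le_add_left _ _) (by linarith)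
    have hs1 : Summable (fun k : ℕ+ => (((m : ℕ) + (k : ℕ) : ℕ) : ℝ) ^ (-t)) :=
      Summable.of_nonneg_of_le (fun k => by positivity) hle (aux13_rsummable_pnat ht)
    have hnormtail : ‖∑' k : ℕ+, (((m : ℕ) : ℂ) + ((k : ℕ) : ℂ)) ^ (-(t : ℂ))‖
        ≤ ∑' n : ℕ, (n : ℝ) ^ (-t) := by
      have heq : ∀ k : ℕ+, ‖(((m : ℕ) : ℂ) + ((k : ℕ) : ℂ)) ^ (-(t : ℂ))‖
          = (((m : ℕ) + (k : ℕ) : ℕ) : ℝ) ^ (-t) := fun k => by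
        rw [show (((m : ℕ) : ℂ) + ((k : ℕ) : ℂ)) = (((m : ℕ) + (k : ℕ) : ℕ) : ℂ) by
          push_cast; ring, aux13_norm_cpow_real _ (Nat.add_pos_left m.pos _)]
      calc ‖∑' k : ℕ+, (((m : ℕ) : ℂ) + ((k : ℕ) : ℂ)) ^ (-(t : ℂ))‖
          ≤ ∑' k : ℕ+, (((m : ℕ) + (k : ℕ) : ℕ) : ℝ) ^ (-t) := by
            refine le_of_le_of_eq (norm_tsum_le_tsum_norm ?_) (tsum_congr heq)
            exact hs1.congr fun k => (heq k).symm
        _ ≤ ∑' k : ℕ+, ((k : ℕ) : ℝ) ^ (-t) := Summable.tsum_le_tsum hle hs1 (aux13_rsummable_pnat ht)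
        _ = ∑' n : ℕ, (n : ℝ) ^ (-t) := aux13_tsum_pnat_rpow ht
    have habs : ‖(t:ℂ) - 1‖ = t - 1 := by
      rw [show (t:ℂ) - 1 = ((t - 1 : ℝ) : ℂ) by push_cast; ring, Complex.norm_real,
        Real.norm_eq_abs, abs_of_pos (by linarith)]
    rw [hF]
    simp only
    rw [norm_mul, norm_mul, hnorm1, habs]
    have hZnn : (0:ℝ) ≤ ∑' n : ℕ, (n : ℝ) ^ (-t) := tsum_nonneg fun n => by positivity
    calc (t - 1) * (((m : ℕ) : ℝ) ^ (-s₁.re)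
          * ‖∑' k : ℕ+, (((m : ℕ) : ℂ) + ((k : ℕ) : ℂ)) ^ (-(t : ℂ))‖)
        ≤ (t - 1) * (((m : ℕ) : ℝ) ^ (-s₁.re) * ∑' n : ℕ, (n : ℝ) ^ (-t)) := by
          apply mul_le_mul_of_nonneg_left _ (by linarith)
          exact mul_le_mul_of_nonneg_left hnormtail (by positivity)
      _ = ((t - 1) * ∑' n : ℕ, (n : ℝ) ^ (-t)) * ((m : ℕ) : ℝ) ^ (-s₁.re) := by ring
      _ ≤ 2 * ((m : ℕ) : ℝ) ^ (-s₁.re) := mul_le_mul_of_nonneg_right h2t (by positivity)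
  -- conclude
  have hmain := tendsto_tsum_of_dominated_convergence (ha.mul_left 2) hpt hb
  have hfinal : ∑' m : ℕ+, ((m : ℕ) : ℂ) ^ (-s₁) = riemannZeta s₁ := by
    have h0 := aux13_tail_eq h₁ 0
    simp only [Nat.cast_zero, zero_add, Finset.range_one, Finset.sum_singleton] at h0
    rw [h0, Complex.zero_cpow (neg_ne_zero.mpr fun h => by
      rw [h] at h₁; rw [Complex.zero_re] at h₁; linarith), sub_zero]
  rw [← hfinal]
  exact Tendsto.congr' (hE.mono fun t ht => ht.symm) hmain
end

section
/- For every integer r ≥ 1, the limit as t → 1⁺ (t real, t > 1) of (t−1)^r ζ_r(t, t, …, t) exists and equals 1/r!. -/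
open Filter Topology

/-- The Euler–Zagier `r`-ple zeta-function, defined by its multiple series
`ζ_r(s) = ∑_{0 < m₁ < ⋯ < m_r} m₁^{-s₁} ⋯ m_r^{-s_r}`, written via the substitution
`m_j = n₁ + ⋯ + n_j` with `n : Fin r → ℕ+`. -/
noncomputable def eulerZagierZeta {r : ℕ} (s : Fin r → ℂ) : ℂ :=
  ∑' n : Fin r → ℕ+, ∏ j : Fin r, (((∑ i ∈ Finset.Iic j, (n i : ℕ)) : ℂ) ^ (-(s j)))

/-!
Peel off the last summation variable. If `m` is the last partial sum of the other variables,
the inner sum is the zeta tail `∑_{k > m} k^{-s}`, which the integral test pins between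
`(m + 1)^{1-s} / (s - 1) ≥ 2^{1-s} m^{1-s} / (s - 1)` and `m^{1-s} / (s - 1)`. Hence
`(s - 1) ζ_{r+1}(t, …, t, s)` lies between `2^{1-s} ζ_r(t, …, t, s + t - 1)` and
`ζ_r(t, …, t, s + t - 1)`, and induction on `r` from `1 ≤ (s - 1) ζ(s) ≤ s` gives, at `s = t`,
`∏_{j<r} 2^{1-(t + j(t-1))} ≤ (r + 1)! (t - 1)^{r+1} ζ_{r+1}(t, …, t) ≤ 1 + (r + 1)(t - 1)`.
The series are summed in `ℝ≥0∞`, where reordering needs no summability.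
-/

open Set
open scoped ENNReal

namespace EulerZagier

lemma prod_range_succ_arith {M : Type*} [CommMonoid M] (g : ℝ → M) (s d : ℝ) (r : ℕ) :
    ∏ j ∈ Finset.range (r + 1), g (s + j * d) = g s * ∏ j ∈ Finset.range r, g (s + d + j * d) := by
  rw [Finset.prod_range_succ', mul_comm]
  congr 1
  · simp
  · refine Finset.prod_congr rfl fun j _ => ?_
    push_cast
    ring_nf

lemma natCast_rpow_eq_ofReal {m : ℕ} (hm : 0 < m) (p : ℝ) :
    (m : ℝ≥0∞) ^ p = ENNReal.ofReal ((m : ℝ) ^ p) := by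
  rw [← ENNReal.ofReal_natCast, ENNReal.ofReal_rpow_of_pos (by exact_mod_cast hm)]

section Tail

variable {s : ℝ}

lemma summable_natCast_rpow_neg (hs : 1 < s) : Summable fun n : ℕ => (n : ℝ) ^ (-s) :=
  Real.summable_nat_rpow.mpr (by linarith)

lemma antitoneOn_rpow_neg (hs : 1 < s) {c : ℝ} (hc : 0 < c) :
    AntitoneOn (fun x : ℝ => x ^ (-s)) (Ici c) :=
  (Real.antitoneOn_rpow_Ioi_of_exponent_nonpos (by linarith)).mono (Ici_subset_Ioi.mpr hc)

lemma integral_Ioi_rpow_neg (hs : 1 < s) {c : ℝ} (hc : 0 < c) :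
    ∫ x in Ioi c, x ^ (-s) = c ^ (1 - s) / (s - 1) := by
  rw [integral_Ioi_rpow_of_lt (by linarith) hc, ← neg_div_neg_eq, neg_neg]
  ring_nf

noncomputable def zetaTail (s : ℝ) (m : ℕ) : ℝ := ∑' k : ℕ, ((k + m + 1 : ℕ) : ℝ) ^ (-s)

lemma sub_one_mul_zetaTail_le (hs : 1 < s) {m : ℕ} (hm : 0 < m) :
    (s - 1) * zetaTail s m ≤ (m : ℝ) ^ (1 - s) := by
  have hm0 : (0 : ℝ) < m := by exact_mod_cast hm
  have h := (antitoneOn_rpow_neg hs hm0).tsum_comp_add_le_integral m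
    (integrableOn_Ioi_rpow_of_lt (by linarith) hm0)
    (fun x hx => Real.rpow_nonneg (hm0.trans hx).le _)
  rw [integral_Ioi_rpow_neg hs hm0, le_div_iff₀ (by linarith)] at h
  rw [zetaTail, mul_comm]
  exact h

lemma add_one_rpow_le_sub_one_mul_zetaTail (hs : 1 < s) (m : ℕ) :
    ((m : ℝ) + 1) ^ (1 - s) ≤ (s - 1) * zetaTail s m := by
  have hm0 : (0 : ℝ) < ((m + 1 : ℕ) : ℝ) := by positivity
  have h := (antitoneOn_rpow_neg hs hm0).integral_le_tsum_comp_add (m + 1)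
    (summable_natCast_rpow_neg hs) (fun x hx => Real.rpow_nonneg (hm0.trans hx).le _)
  rw [integral_Ioi_rpow_neg hs hm0, div_le_iff₀ (by linarith)] at h
  rw [zetaTail, mul_comm]
  exact_mod_cast h

lemma summable_zetaTail (hs : 1 < s) (m : ℕ) :
    Summable fun k : ℕ => ((k + m + 1 : ℕ) : ℝ) ^ (-s) :=
  (summable_natCast_rpow_neg hs).comp_injective fun a b hab => by simpa using hab

lemma zetaTail_zero (hs : 1 < s) : zetaTail s 0 = 1 + zetaTail s 1 := by
  rw [zetaTail, (summable_zetaTail hs 0).tsum_eq_zero_add, zetaTail]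
  simp only [zero_add, Nat.cast_one, Real.one_rpow]

lemma sub_one_mul_zetaTail_zero_le (hs : 1 < s) : (s - 1) * zetaTail s 0 ≤ s := by
  have h := sub_one_mul_zetaTail_le hs one_pos
  rw [Nat.cast_one, Real.one_rpow] at h
  rw [zetaTail_zero hs]
  linarith

lemma two_rpow_mul_le_sub_one_mul_zetaTail (hs : 1 < s) {m : ℕ} (hm : 0 < m) :
    (2 : ℝ) ^ (1 - s) * (m : ℝ) ^ (1 - s) ≤ (s - 1) * zetaTail s m := by
  have hm1 : (1 : ℝ) ≤ m := by exact_mod_cast hm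
  calc (2 : ℝ) ^ (1 - s) * (m : ℝ) ^ (1 - s) = (2 * m : ℝ) ^ (1 - s) := by
        rw [Real.mul_rpow (by norm_num) (by linarith)]
    _ ≤ ((m : ℝ) + 1) ^ (1 - s) :=
        Real.rpow_le_rpow_of_nonpos (by linarith) (by linarith) (by linarith)
    _ ≤ (s - 1) * zetaTail s m := add_one_rpow_le_sub_one_mul_zetaTail hs m

lemma tsum_pnat_natCast_add_rpow (hs : 1 < s) (m : ℕ) :
    ∑' a : ℕ+, ((m + a : ℕ) : ℝ≥0∞) ^ (-s) = ENNReal.ofReal (zetaTail s m) := by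
  rw [zetaTail, ENNReal.ofReal_tsum_of_nonneg (fun _ => by positivity) (summable_zetaTail hs m),
    tsum_pnat_eq_tsum_succ (f := fun a => ((m + a : ℕ) : ℝ≥0∞) ^ (-s))]
  refine tsum_congr fun k => ?_
  rw [← ENNReal.ofReal_natCast, ENNReal.ofReal_rpow_of_pos (by positivity)]
  congr 3
  omega

end Tail

def partialSum {r : ℕ} (n : Fin r → ℕ+) (j : Fin r) : ℕ := ∑ i ∈ Finset.Iic j, (n i : ℕ)

lemma partialSum_pos {r : ℕ} (n : Fin r → ℕ+) (j : Fin r) : 0 < partialSum n j :=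
  (n j).pos.trans_le <| Finset.single_le_sum (f := fun i => (n i : ℕ)) (fun _ _ => Nat.zero_le _)
    (Finset.mem_Iic.mpr le_rfl)

@[simp]
lemma partialSum_snoc_castSucc {r : ℕ} (n : Fin r → ℕ+) (a : ℕ+) (j : Fin r) :
    partialSum (Fin.snoc n a : Fin (r + 1) → ℕ+) j.castSucc = partialSum n j := by
  simp [partialSum, Fin.sum_Iic_castSucc]

@[simp]
lemma partialSum_snoc_last {r : ℕ} (n : Fin (r + 1) → ℕ+) (a : ℕ+) :
    partialSum (Fin.snoc n a : Fin (r + 2) → ℕ+) (Fin.last (r + 1)) =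
      partialSum n (Fin.last r) + a := by
  have hIic : ∀ k : ℕ, Finset.Iic (Fin.last k) = Finset.univ := fun k => by
    ext; simp [Fin.le_last]
  simp [partialSum, hIic, Fin.sum_univ_castSucc]

/-- `ζ_{r+1}(t, …, t, s)`. -/
noncomputable def zetaDiagSnoc (r : ℕ) (t s : ℝ) : ℝ≥0∞ :=
  ∑' n : Fin (r + 1) → ℕ+,
    (∏ j : Fin r, (partialSum n j.castSucc : ℝ≥0∞) ^ (-t)) *
      (partialSum n (Fin.last r) : ℝ≥0∞) ^ (-s)

lemma zetaDiagSnoc_zero {s : ℝ} (hs : 1 < s) (t : ℝ) :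
    zetaDiagSnoc 0 t s = ENNReal.ofReal (zetaTail s 0) := by
  rw [← tsum_pnat_natCast_add_rpow hs, zetaDiagSnoc,
    ← (Equiv.funUnique (Fin 1) ℕ+).symm.tsum_eq]
  refine tsum_congr fun a => ?_
  simp [partialSum]

lemma zetaDiagSnoc_succ {s : ℝ} (hs : 1 < s) (r : ℕ) (t : ℝ) :
    zetaDiagSnoc (r + 1) t s = ∑' n : Fin (r + 1) → ℕ+,
      (∏ j : Fin r, (partialSum n j.castSucc : ℝ≥0∞) ^ (-t)) *
        ((partialSum n (Fin.last r) : ℝ≥0∞) ^ (-t) *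
          ENNReal.ofReal (zetaTail s (partialSum n (Fin.last r)))) := by
  rw [zetaDiagSnoc, ← (Fin.snocEquiv fun _ => ℕ+).tsum_eq, ENNReal.tsum_prod', ENNReal.tsum_comm]
  refine tsum_congr fun n => ?_
  rw [← tsum_pnat_natCast_add_rpow hs, ← ENNReal.tsum_mul_left, ← ENNReal.tsum_mul_left]
  refine tsum_congr fun a => ?_
  simp [Fin.snocEquiv, Fin.prod_univ_castSucc, mul_assoc]

lemma zetaDiagSnoc_add_sub_one (r : ℕ) (t s : ℝ) :
    zetaDiagSnoc r t (s + (t - 1)) = ∑' n : Fin (r + 1) → ℕ+,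
      (∏ j : Fin r, (partialSum n j.castSucc : ℝ≥0∞) ^ (-t)) *
        ((partialSum n (Fin.last r) : ℝ≥0∞) ^ (-t) *
          (partialSum n (Fin.last r) : ℝ≥0∞) ^ (1 - s)) := by
  refine tsum_congr fun n => ?_
  have hm : (partialSum n (Fin.last r) : ℝ≥0∞) ≠ 0 := by
    exact_mod_cast (partialSum_pos n _).ne'
  rw [← ENNReal.rpow_add _ _ hm (ENNReal.natCast_ne_top _)]
  ring_nf

lemma sub_one_mul_zetaDiagSnoc_succ_le {s : ℝ} (hs : 1 < s) (r : ℕ) (t : ℝ) :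
    ENNReal.ofReal (s - 1) * zetaDiagSnoc (r + 1) t s ≤ zetaDiagSnoc r t (s + (t - 1)) := by
  rw [zetaDiagSnoc_succ hs, zetaDiagSnoc_add_sub_one, ← ENNReal.tsum_mul_left]
  refine ENNReal.tsum_le_tsum fun n => ?_
  have hm := partialSum_pos n (Fin.last r)
  rw [mul_left_comm, mul_left_comm (ENNReal.ofReal _), ← ENNReal.ofReal_mul (by linarith),
    natCast_rpow_eq_ofReal hm (1 - s)]
  gcongr
  exact sub_one_mul_zetaTail_le hs hm

lemma two_rpow_mul_zetaDiagSnoc_le {s : ℝ} (hs : 1 < s) (r : ℕ) (t : ℝ) :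
    ENNReal.ofReal (2 ^ (1 - s)) * zetaDiagSnoc r t (s + (t - 1)) ≤
      ENNReal.ofReal (s - 1) * zetaDiagSnoc (r + 1) t s := by
  rw [zetaDiagSnoc_succ hs, zetaDiagSnoc_add_sub_one, ← ENNReal.tsum_mul_left,
    ← ENNReal.tsum_mul_left]
  refine ENNReal.tsum_le_tsum fun n => ?_
  have hm := partialSum_pos n (Fin.last r)
  rw [mul_left_comm, mul_left_comm (ENNReal.ofReal _), mul_left_comm (ENNReal.ofReal (s - 1)),
    mul_left_comm (ENNReal.ofReal (s - 1)), natCast_rpow_eq_ofReal hm (1 - s),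
    ← ENNReal.ofReal_mul (by positivity), ← ENNReal.ofReal_mul (by linarith)]
  gcongr _ * (_ * ENNReal.ofReal ?_)
  exact two_rpow_mul_le_sub_one_mul_zetaTail hs hm

lemma prod_mul_zetaDiagSnoc_le {t : ℝ} (ht : 1 < t) (r : ℕ) {s : ℝ} (hs : 1 < s) :
    (∏ j ∈ Finset.range (r + 1), ENNReal.ofReal (s + j * (t - 1) - 1)) * zetaDiagSnoc r t s ≤
      ENNReal.ofReal (s + r * (t - 1)) := by
  induction r generalizing s with
  | zero =>
    simp only [zero_add, Finset.prod_range_one, Nat.cast_zero, zero_mul, add_zero,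
      zetaDiagSnoc_zero hs]
    rw [← ENNReal.ofReal_mul (by linarith)]
    exact ENNReal.ofReal_le_ofReal (sub_one_mul_zetaTail_zero_le hs)
  | succ r ih =>
    rw [prod_range_succ_arith (fun x => ENNReal.ofReal (x - 1))]
    calc _ = (∏ j ∈ Finset.range (r + 1), ENNReal.ofReal (s + (t - 1) + j * (t - 1) - 1)) *
          (ENNReal.ofReal (s - 1) * zetaDiagSnoc (r + 1) t s) := by ring
      _ ≤ (∏ j ∈ Finset.range (r + 1), ENNReal.ofReal (s + (t - 1) + j * (t - 1) - 1)) *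
          zetaDiagSnoc r t (s + (t - 1)) := by
        gcongr
        exact sub_one_mul_zetaDiagSnoc_succ_le hs r t
      _ ≤ ENNReal.ofReal (s + (t - 1) + r * (t - 1)) := ih (by linarith)
      _ = ENNReal.ofReal (s + (r + 1 : ℕ) * (t - 1)) := by push_cast; ring_nf

lemma prod_two_rpow_le_prod_mul_zetaDiagSnoc {t : ℝ} (ht : 1 < t) (r : ℕ) {s : ℝ} (hs : 1 < s) :
    ∏ j ∈ Finset.range r, ENNReal.ofReal (2 ^ (1 - (s + j * (t - 1)))) ≤
      (∏ j ∈ Finset.range (r + 1), ENNReal.ofReal (s + j * (t - 1) - 1)) * zetaDiagSnoc r t s := by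
  induction r generalizing s with
  | zero =>
    simp only [Finset.range_zero, Finset.prod_empty, zero_add, Finset.prod_range_one,
      Nat.cast_zero, zero_mul, add_zero, zetaDiagSnoc_zero hs]
    rw [← ENNReal.ofReal_mul (by linarith), ← ENNReal.ofReal_one]
    refine ENNReal.ofReal_le_ofReal ?_
    simpa using add_one_rpow_le_sub_one_mul_zetaTail hs 0
  | succ r ih =>
    rw [prod_range_succ_arith (fun x => ENNReal.ofReal (2 ^ (1 - x))),
      prod_range_succ_arith (fun x => ENNReal.ofReal (x - 1))]
    calc
      _ ≤ ENNReal.ofReal (2 ^ (1 - s)) *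
          ((∏ j ∈ Finset.range (r + 1), ENNReal.ofReal (s + (t - 1) + j * (t - 1) - 1)) *
            zetaDiagSnoc r t (s + (t - 1))) := by
        gcongr
        exact ih (by linarith)
      _ = (∏ j ∈ Finset.range (r + 1), ENNReal.ofReal (s + (t - 1) + j * (t - 1) - 1)) *
          (ENNReal.ofReal (2 ^ (1 - s)) * zetaDiagSnoc r t (s + (t - 1))) := by ring
      _ ≤ (∏ j ∈ Finset.range (r + 1), ENNReal.ofReal (s + (t - 1) + j * (t - 1) - 1)) *
          (ENNReal.ofReal (s - 1) * zetaDiagSnoc (r + 1) t s) := by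
        gcongr _ * ?_
        exact two_rpow_mul_zetaDiagSnoc_le hs r t
      _ = _ := by ring

lemma prod_range_ofReal_eq_factorial_mul_pow {t : ℝ} (ht : 1 < t) (r : ℕ) :
    ∏ j ∈ Finset.range (r + 1), ENNReal.ofReal (t + j * (t - 1) - 1) =
      ENNReal.ofReal ((r + 1).factorial * (t - 1) ^ (r + 1)) := by
  rw [← ENNReal.ofReal_prod_of_nonneg fun j _ => by nlinarith [(j.cast_nonneg : (0 : ℝ) ≤ j)]]
  congr 1
  calc ∏ j ∈ Finset.range (r + 1), (t + j * (t - 1) - 1)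
      = ∏ j ∈ Finset.range (r + 1), (((j + 1 : ℕ) : ℝ) * (t - 1)) :=
        Finset.prod_congr rfl fun j _ => by push_cast; ring
    _ = (r + 1).factorial * (t - 1) ^ (r + 1) := by
        rw [Finset.prod_mul_distrib, Finset.prod_const, Finset.card_range, ← Nat.cast_prod,
          Finset.prod_range_add_one_eq_factorial]

lemma factorial_mul_sub_one_pow_pos {t : ℝ} (ht : 1 < t) (r : ℕ) :
    0 < (r + 1).factorial * (t - 1) ^ (r + 1) :=
  mul_pos (by positivity) (pow_pos (by linarith) _)

lemma zetaDiagSnoc_ne_top {t : ℝ} (ht : 1 < t) (r : ℕ) : zetaDiagSnoc r t t ≠ ⊤ := by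
  have h := prod_mul_zetaDiagSnoc_le ht r ht
  rw [prod_range_ofReal_eq_factorial_mul_pow ht] at h
  refine (ENNReal.lt_top_of_mul_ne_top_right (ne_top_of_le_ne_top ENNReal.ofReal_ne_top h) ?_).ne
  exact ENNReal.ofReal_pos.mpr (factorial_mul_sub_one_pow_pos ht r) |>.ne'

lemma factorial_mul_pow_mul_zetaDiagSnoc_le {t : ℝ} (ht : 1 < t) (r : ℕ) :
    (r + 1).factorial * (t - 1) ^ (r + 1) * (zetaDiagSnoc r t t).toReal ≤ t + r * (t - 1) := by
  have h := prod_mul_zetaDiagSnoc_le ht r ht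
  rw [prod_range_ofReal_eq_factorial_mul_pow ht, ← ENNReal.ofReal_toReal (zetaDiagSnoc_ne_top ht r),
    ← ENNReal.ofReal_mul (factorial_mul_sub_one_pow_pos ht r).le] at h
  exact (ENNReal.ofReal_le_ofReal_iff (by nlinarith)).mp h

lemma prod_two_rpow_le_factorial_mul_pow_mul_zetaDiagSnoc {t : ℝ} (ht : 1 < t) (r : ℕ) :
    ∏ j ∈ Finset.range r, (2 : ℝ) ^ (1 - (t + j * (t - 1))) ≤
      (r + 1).factorial * (t - 1) ^ (r + 1) * (zetaDiagSnoc r t t).toReal := by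
  have h := prod_two_rpow_le_prod_mul_zetaDiagSnoc ht r ht
  rw [prod_range_ofReal_eq_factorial_mul_pow ht, ← ENNReal.ofReal_toReal (zetaDiagSnoc_ne_top ht r),
    ← ENNReal.ofReal_mul (factorial_mul_sub_one_pow_pos ht r).le,
    ← ENNReal.ofReal_prod_of_nonneg fun _ _ => by positivity] at h
  exact (ENNReal.ofReal_le_ofReal_iff (by positivity)).mp h

lemma tendsto_sub_one_pow_mul_zetaDiagSnoc (r : ℕ) :
    Tendsto (fun t : ℝ => (t - 1) ^ (r + 1) * (zetaDiagSnoc r t t).toReal) (𝓝[>] 1)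
      (𝓝 (1 / (r + 1).factorial)) := by
  have hlower : Tendsto (fun t : ℝ => ∏ j ∈ Finset.range r, (2 : ℝ) ^ (1 - (t + j * (t - 1))))
      (𝓝[>] 1) (𝓝 1) := by
    have hc : Continuous fun t : ℝ =>
        ∏ j ∈ Finset.range r, (2 : ℝ) ^ (1 - (t + j * (t - 1))) := by
      fun_prop (disch := norm_num)
    simpa using hc.continuousWithinAt (s := Ioi 1) (x := 1) |>.tendsto
  have hupper : Tendsto (fun t : ℝ => t + r * (t - 1)) (𝓝[>] 1) (𝓝 1) := by
    have hc : Continuous fun t : ℝ => t + r * (t - 1) := by fun_prop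
    simpa using hc.continuousWithinAt (s := Ioi 1) (x := 1) |>.tendsto
  have hsq : Tendsto
      (fun t : ℝ => (r + 1).factorial * (t - 1) ^ (r + 1) * (zetaDiagSnoc r t t).toReal)
      (𝓝[>] 1) (𝓝 1) :=
    tendsto_of_tendsto_of_tendsto_of_le_of_le' hlower hupper
      (eventually_nhdsWithin_of_forall fun t ht =>
        prod_two_rpow_le_factorial_mul_pow_mul_zetaDiagSnoc (mem_Ioi.mp ht) r)
      (eventually_nhdsWithin_of_forall fun t ht =>
        factorial_mul_pow_mul_zetaDiagSnoc_le (mem_Ioi.mp ht) r)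
  have hfac : ((r + 1).factorial : ℝ) ≠ 0 := by positivity
  simpa [mul_assoc, hfac] using hsq.const_mul ((r + 1).factorial : ℝ)⁻¹

lemma eulerZagierZeta_ofReal {r : ℕ} (s : Fin r → ℝ) :
    eulerZagierZeta (fun j => (s j : ℂ)) =
      (∑' n : Fin r → ℕ+, ∏ j, (partialSum n j : ℝ≥0∞) ^ (-s j)).toReal := by
  have hfin : ∀ n : Fin r → ℕ+, ∏ j, (partialSum n j : ℝ≥0∞) ^ (-s j) ≠ ⊤ := fun n =>
    ENNReal.prod_ne_top fun j _ => ENNReal.rpow_ne_top_of_ne_zero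
      (by exact_mod_cast (partialSum_pos n j).ne') (ENNReal.natCast_ne_top _)
  rw [ENNReal.tsum_toReal_eq hfin, Complex.ofReal_tsum, eulerZagierZeta]
  refine tsum_congr fun n => ?_
  rw [ENNReal.toReal_prod, Complex.ofReal_prod]
  refine Finset.prod_congr rfl fun j _ => ?_
  rw [← ENNReal.toReal_rpow, ENNReal.toReal_natCast, Complex.ofReal_cpow (Nat.cast_nonneg _)]
  push_cast [partialSum]
  rfl

lemma zetaDiagSnoc_self (r : ℕ) (t : ℝ) :
    zetaDiagSnoc r t t = ∑' n : Fin (r + 1) → ℕ+, ∏ j, (partialSum n j : ℝ≥0∞) ^ (-t) :=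
  tsum_congr fun n => (Fin.prod_univ_castSucc fun j => (partialSum n j : ℝ≥0∞) ^ (-t)).symm

end EulerZagier

/-- For every `r ≥ 1`, `(t-1)^r ζ_r(t,…,t) → 1/r!` as `t → 1⁺`. -/
theorem statement15 (r : ℕ) (hr : 1 ≤ r) :
    Tendsto (fun t : ℝ => ((t : ℂ) - 1) ^ r * eulerZagierZeta (fun _ : Fin r => (t : ℂ)))
      (nhdsWithin 1 (Set.Ioi 1)) (nhds (1 / (r.factorial : ℂ))) := by
  obtain ⟨r, rfl⟩ := Nat.exists_eq_add_of_le' hr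
  have h := (Complex.continuous_ofReal.tendsto _).comp
    (EulerZagier.tendsto_sub_one_pow_mul_zetaDiagSnoc r)
  push_cast at h
  refine h.congr fun t => ?_
  simp [EulerZagier.eulerZagierZeta_ofReal (fun _ => t), EulerZagier.zetaDiagSnoc_self]
end
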